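/- Suppose the confidence condition holds, and let π̄ be any greedy policy of pessimistic value iteration, i.e. π̄_t(s) ∈ argmax_{a∈A} Q̄*_t(s,a) for all t, s. Then the pessimistic values lower-bound the true values of π̄: for all t ∈ {1,…,H+1} and s ∈ S, V̄*_t(s) ≤ V^{π̄}_t(s). -/

import Mathlib

/-!
Backward induction on `t`. The true values of `π̄` lie in `[0, H + 1 - t]`, so replacing `P` by
`P̂` in a Bellman backup of `V^{π̄}_{t+1}` costs at most `H · ‖P̂(·|s,a) - P(·|s,a)‖₁`. Together
with the reward error this is absorbed by the bonus, so the pessimistic backup at the greedy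
action `π̄_t(s)` stays below the true backup, which is `V^{π̄}_t(s)`.
-/

open Finset

theorem backward_induction_Icc {H : ℕ} {p : ℕ → Prop} (hlast : p (H + 1))
    (hstep : ∀ t ∈ Icc 1 H, p (t + 1) → p t) : ∀ t ∈ Icc 1 (H + 1), p t := by
  intro t ht
  rw [mem_Icc] at ht
  exact Nat.decreasingInduction' (fun k hk hk1 => hstep k (mem_Icc.2 ⟨ht.1.trans hk1, by omega⟩))
    ht.2 hlast

section BellmanBackup

variable {S : Type*} [Fintype S]

theorem bellman_backup_mem_Icc {p v : S → ℝ} {r c : ℝ} (hp0 : ∀ s, 0 ≤ p s)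
    (hp1 : ∑ s, p s = 1) (hr : r ∈ Set.Icc 0 1) (hv : ∀ s, v s ∈ Set.Icc 0 c) :
    r + ∑ s, p s * v s ∈ Set.Icc 0 (1 + c) := by
  have hnonneg : 0 ≤ ∑ s, p s * v s :=
    sum_nonneg fun s _ => mul_nonneg (hp0 s) (hv s).1
  have hle : ∑ s, p s * v s ≤ c :=
    calc ∑ s, p s * v s ≤ ∑ s, p s * c :=
          sum_le_sum fun s _ => mul_le_mul_of_nonneg_left (hv s).2 (hp0 s)
      _ = c := by rw [← sum_mul, hp1, one_mul]
  exact ⟨add_nonneg hr.1 hnonneg, add_le_add hr.2 hle⟩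

theorem sum_mul_le_sum_mul_add_of_abs_le {p q v : S → ℝ} {M : ℝ} (hv : ∀ s, |v s| ≤ M) :
    ∑ s, p s * v s ≤ ∑ s, q s * v s + M * ∑ s, |p s - q s| := by
  have hdiff : ∑ s, (p s - q s) * v s ≤ ∑ s, M * |p s - q s| :=
    sum_le_sum fun s _ =>
      calc (p s - q s) * v s ≤ |(p s - q s) * v s| := le_abs_self _
        _ = |p s - q s| * |v s| := abs_mul _ _
        _ ≤ |p s - q s| * M := mul_le_mul_of_nonneg_left (hv s) (abs_nonneg _)
        _ = M * |p s - q s| := mul_comm _ _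
  simp only [sub_mul, sum_sub_distrib, ← mul_sum] at hdiff
  linarith

theorem pessimistic_backup_le {p phat v vbar : S → ℝ} {r rhat β M : ℝ}
    (hphat0 : ∀ s, 0 ≤ phat s) (hconf : |rhat - r| + M * ∑ s, |phat s - p s| ≤ β)
    (hv : ∀ s, |v s| ≤ M) (hvbar : ∀ s, vbar s ≤ v s) :
    rhat - β + ∑ s, phat s * vbar s ≤ r + ∑ s, p s * v s := by
  have hmono : ∑ s, phat s * vbar s ≤ ∑ s, phat s * v s :=
    sum_le_sum fun s _ => mul_le_mul_of_nonneg_left (hvbar s) (hphat0 s)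
  have hshift := sum_mul_le_sum_mul_add_of_abs_le (p := phat) (q := p) hv
  linarith [le_abs_self (rhat - r)]

end BellmanBackup

theorem policy_value_mem_Icc {S A : Type*} [Fintype S] (P : S → A → S → ℝ) (R : S → A → ℝ)
    (H : ℕ) (hP0 : ∀ s a s', 0 ≤ P s a s') (hP1 : ∀ s a, ∑ s' : S, P s a s' = 1)
    (hR : ∀ s a, R s a ∈ Set.Icc 0 1) (π : ℕ → S → A) (V : ℕ → S → ℝ)
    (hVEnd : ∀ s, V (H + 1) s = 0)
    (hV : ∀ t ∈ Icc 1 H, ∀ s, V t s = R s (π t s) + ∑ s' : S, P s (π t s) s' * V (t + 1) s') :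
    ∀ t ∈ Icc 1 (H + 1), ∀ s, V t s ∈ Set.Icc 0 ((H : ℝ) + 1 - t) := by
  refine backward_induction_Icc (fun s => by simp [hVEnd]) fun t ht hnext s => ?_
  rw [hV t ht s]
  convert bellman_backup_mem_Icc (hP0 s (π t s)) (hP1 s (π t s)) (hR s (π t s)) hnext using 2
  push_cast
  ring

theorem pessimistic_value_iteration_lower_bounds_greedy_policy_general
    {S A : Type*} [Fintype S]
    (P : S → A → S → ℝ) (R : S → A → ℝ) (H : ℕ)
    (hP0 : ∀ s a s', 0 ≤ P s a s')
    (hP1 : ∀ s a, ∑ s' : S, P s a s' = 1)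
    (hR0 : ∀ s a, 0 ≤ R s a) (hR1 : ∀ s a, R s a ≤ 1)
    (Phat : S → A → S → ℝ)
    (hPhat0 : ∀ s a s', 0 ≤ Phat s a s')
    (Rhat : S → A → ℝ) (b : S → A → ℝ)
    (hconf : ∀ s a,
      |Rhat s a - R s a| + H * ∑ s' : S, |Phat s a s' - P s a s'| ≤ b s a)
    (Qbar : ℕ → S → A → ℝ) (Vbar : ℕ → S → ℝ)
    (hVbarEnd : ∀ s, Vbar (H + 1) s = 0)
    (hQbar : ∀ t ∈ Finset.Icc 1 H, ∀ s a,
      Qbar t s a = Rhat s a - b s a + ∑ s' : S, Phat s a s' * Vbar (t + 1) s')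
    (πbar : ℕ → S → A)
    (hgreedy : ∀ t ∈ Finset.Icc 1 H, ∀ s, Qbar t s (πbar t s) = Vbar t s)
    (Qpi : ℕ → S → A → ℝ) (Vpi : ℕ → S → ℝ)
    (hVpiEnd : ∀ s, Vpi (H + 1) s = 0)
    (hQpi : ∀ t ∈ Finset.Icc 1 H, ∀ s a,
      Qpi t s a = R s a + ∑ s' : S, P s a s' * Vpi (t + 1) s')
    (hVpi : ∀ t ∈ Finset.Icc 1 H, ∀ s, Vpi t s = Qpi t s (πbar t s)) :
    ∀ t ∈ Finset.Icc 1 (H + 1), ∀ s, Vbar t s ≤ Vpi t s := by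
  have hVpi_mem := policy_value_mem_Icc P R H hP0 hP1 (fun s a => ⟨hR0 s a, hR1 s a⟩) πbar Vpi
    hVpiEnd fun t ht s => (hVpi t ht s).trans (hQpi t ht s _)
  refine backward_induction_Icc (fun s => by simp [hVbarEnd, hVpiEnd]) fun t ht hnext s => ?_
  have ht' := mem_Icc.1 ht
  have hVpi_abs : ∀ s', |Vpi (t + 1) s'| ≤ H := fun s' => by
    obtain ⟨h0, h1⟩ := hVpi_mem (t + 1) (mem_Icc.2 ⟨by omega, by omega⟩) s'
    rw [abs_of_nonneg h0]
    push_cast at h1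
    linarith [show (1 : ℝ) ≤ t by exact_mod_cast ht'.1]
  rw [← hgreedy t ht s, hQbar t ht, hVpi t ht s, hQpi t ht]
  exact pessimistic_backup_le (hPhat0 s _) (hconf s _) hVpi_abs hnext

/-- Under the confidence condition, if `π̄` is a greedy policy of pessimistic value
iteration (i.e. `π̄_t(s)` attains the maximum of `Q̄*_t(s,·)`), then the pessimistic
values lower-bound the true values of `π̄`: `V̄*_t(s) ≤ V^{π̄}_t(s)` for all
`t ∈ {1,…,H+1}` and `s ∈ S`. -/
theorem pessimistic_value_iteration_lower_bounds_greedy_policy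
    {S A : Type*} [Fintype S] [Fintype A] [Nonempty A]
    (P : S → A → S → ℝ) (R : S → A → ℝ) (H : ℕ)
    (hP0 : ∀ s a s', 0 ≤ P s a s')
    (hP1 : ∀ s a, ∑ s' : S, P s a s' = 1)
    (hR0 : ∀ s a, 0 ≤ R s a) (hR1 : ∀ s a, R s a ≤ 1)
    (Phat : S → A → S → ℝ)
    (hPhat0 : ∀ s a s', 0 ≤ Phat s a s')
    (hPhat1 : ∀ s a, ∑ s' : S, Phat s a s' = 1)
    (Rhat : S → A → ℝ) (b : S → A → ℝ)
    (hconf : ∀ s a,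
      |Rhat s a - R s a| + H * ∑ s' : S, |Phat s a s' - P s a s'| ≤ b s a)
    (Qbar : ℕ → S → A → ℝ) (Vbar : ℕ → S → ℝ)
    (hVbarEnd : ∀ s, Vbar (H + 1) s = 0)
    (hQbar : ∀ t ∈ Finset.Icc 1 H, ∀ s a,
      Qbar t s a = Rhat s a - b s a + ∑ s' : S, Phat s a s' * Vbar (t + 1) s')
    (hVbar : ∀ t ∈ Finset.Icc 1 H, ∀ s,
      Vbar t s = Finset.univ.sup' Finset.univ_nonempty (fun a => Qbar t s a))
    (πbar : ℕ → S → A)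
    (hgreedy : ∀ t ∈ Finset.Icc 1 H, ∀ s, Qbar t s (πbar t s) = Vbar t s)
    (Qpi : ℕ → S → A → ℝ) (Vpi : ℕ → S → ℝ)
    (hVpiEnd : ∀ s, Vpi (H + 1) s = 0)
    (hQpi : ∀ t ∈ Finset.Icc 1 H, ∀ s a,
      Qpi t s a = R s a + ∑ s' : S, P s a s' * Vpi (t + 1) s')
    (hVpi : ∀ t ∈ Finset.Icc 1 H, ∀ s, Vpi t s = Qpi t s (πbar t s)) :
    ∀ t ∈ Finset.Icc 1 (H + 1), ∀ s, Vbar t s ≤ Vpi t s :=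
  pessimistic_value_iteration_lower_bounds_greedy_policy_general P R H hP0 hP1 hR0 hR1 Phat hPhat0
    Rhat b hconf Qbar Vbar hVbarEnd hQbar πbar hgreedy Qpi Vpi hVpiEnd hQpi hVpi
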